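/- arXiv:1103.2635 — 3 statements merged into one kernel-verified Lean document; each statement's English description precedes it below -/
import Mathlib

section
/- Let (M, ρ) be a metric space, X a finite subset, R ⊆ X nonempty, and q ∈ M. Assign each x ∈ X to a nearest element of R. Let γ = min_{r∈R} ρ(q,r). If x* is a nearest neighbor of q in X and r* ∈ R is a nearest element of R to x*, then ρ(q, r*) ≤ 3γ. -/
theorem dist_le_three_mul_of_nearest {M : Type*} [PseudoMetricSpace M] {q x r r₀ : M}
    (hx : dist q x ≤ dist q r₀) (hr : dist x r ≤ dist x r₀) :
    dist q r ≤ 3 * dist q r₀ :=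
  calc dist q r ≤ dist q x + dist x r := dist_triangle q x r
    _ ≤ dist q x + (dist x q + dist q r₀) := by
      grw [hr, dist_triangle x q r₀]
    _ = 2 * dist q x + dist q r₀ := by rw [dist_comm x q]; ring
    _ ≤ 3 * dist q r₀ := by linarith

theorem rbc_prune_lemma_general {M : Type*} [MetricSpace M] (X R : Finset M)
    (hRX : R ⊆ X) (q xstar rstar : M) (γ : ℝ)
    (hxNN : ∀ y ∈ X, dist q xstar ≤ dist q y)
    (hrNN : ∀ r ∈ R, dist xstar rstar ≤ dist xstar r)
    (hγmem : ∃ r ∈ R, dist q r = γ) :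
    dist q rstar ≤ 3 * γ := by
  obtain ⟨r₀, hr₀, rfl⟩ := hγmem
  exact dist_le_three_mul_of_nearest (hxNN r₀ (hRX hr₀)) (hrNN r₀ hr₀)

/-- Lemma (prune2): if `x*` is a nearest neighbor of `q` in `X` and `r*` is a nearest
element of `R` to `x*`, then `ρ(q,r*) ≤ 3γ` where `γ = min_{r∈R} ρ(q,r)`. -/
theorem rbc_prune_lemma {M : Type*} [MetricSpace M] (X R : Finset M)
    (hRX : R ⊆ X) (hR : R.Nonempty) (q xstar rstar : M) (γ : ℝ)
    (hx : xstar ∈ X) (hxNN : ∀ y ∈ X, dist q xstar ≤ dist q y)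
    (hr : rstar ∈ R) (hrNN : ∀ r ∈ R, dist xstar rstar ≤ dist xstar r)
    (hγlb : ∀ r ∈ R, γ ≤ dist q r) (hγmem : ∃ r ∈ R, dist q r = γ) :
    dist q rstar ≤ 3 * γ :=
  rbc_prune_lemma_general X R hRX q xstar rstar γ hxNN hrNN hγmem
end

section
/- Exact search correctness: Let X be a finite subset of a metric space, R ⊆ X nonempty, with each x ∈ X assigned to the ownership list L_r of its nearest r ∈ R and ψ_r = max_{x∈L_r} ρ(x,r). For a query q with γ = min_{r∈R} ρ(q,r), the point returned by brute-force search over the union of lists L_r for r ∈ R satisfying both ρ(q,r) < γ + ψ_r and ρ(q,r) ≤ 3γ is a true nearest neighbor of q in X. -/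
/-! Let `x*` be a nearest neighbour of `q` in `X` and `r = owner x*`. Since `R ⊆ X`, `ρ(q,x*) ≤ γ`.
The triangle inequality through `x*` gives `ρ(q,r) ≤ γ + ψ_r`, and, as `r` is at least as close to
`x*` as the representative `r₀` realising `γ`, also `ρ(q,r) ≤ 2ρ(q,x*) + ρ(q,r₀) ≤ 3γ`. So `r` is kept,
`x*` lies in the searched set, and the minimiser over that set is as close to `q` as `x*`. -/

theorem dist_le_two_mul_add_of_dist_le {M : Type*} [PseudoMetricSpace M] {q x r r₀ : M}
    (h : dist x r ≤ dist x r₀) : dist q r ≤ 2 * dist q x + dist q r₀ :=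
  calc dist q r ≤ dist q x + dist x r := dist_triangle q x r
    _ ≤ dist q x + (dist x q + dist q r₀) := by gcongr; exact h.trans (dist_triangle x q r₀)
    _ = 2 * dist q x + dist q r₀ := by rw [dist_comm x q]; ring

theorem exact_search_correct_general {M : Type*} [MetricSpace M] [DecidableEq M]
    (X R : Finset M) (hRX : R ⊆ X)
    (q : M) (owner : M → M)
    (howner : ∀ x ∈ X, owner x ∈ R ∧ ∀ r ∈ R, dist x (owner x) ≤ dist x r)
    (L : M → Finset M) (hL : ∀ r, L r = X.filter fun x => owner x = r)
    (ψ : M → ℝ) (hψ : ∀ r ∈ R, ∀ x ∈ L r, dist x r ≤ ψ r)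
    (γ : ℝ) (hγmem : ∃ r ∈ R, dist q r = γ)
    (S : Finset M)
    (hS : S = R.biUnion fun r =>
      if dist q r ≤ γ + ψ r ∧ dist q r ≤ 3 * γ then L r else ∅)
    (x0 : M) (hmin : ∀ x ∈ S, dist q x0 ≤ dist q x) :
    ∀ y ∈ X, dist q x0 ≤ dist q y := by
  obtain ⟨r₀, hr₀R, rfl⟩ := hγmem
  obtain ⟨xs, hxsX, hxs_min⟩ := X.exists_min_image (dist q) ⟨r₀, hRX hr₀R⟩
  have hxs_le : dist q xs ≤ dist q r₀ := hxs_min r₀ (hRX hr₀R)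
  obtain ⟨hownerR, howner_le⟩ := howner xs hxsX
  have hxsL : xs ∈ L (owner xs) := by rw [hL]; exact Finset.mem_filter.mpr ⟨hxsX, rfl⟩
  have hkeep_ψ : dist q (owner xs) ≤ dist q r₀ + ψ (owner xs) :=
    (dist_triangle q xs _).trans (add_le_add hxs_le (hψ _ hownerR xs hxsL))
  have hkeep_γ : dist q (owner xs) ≤ 3 * dist q r₀ := by
    linarith [dist_le_two_mul_add_of_dist_le (q := q) (howner_le r₀ hr₀R)]
  have hxsS : xs ∈ S := by
    rw [hS, Finset.mem_biUnion]
    exact ⟨owner xs, hownerR, by rwa [if_pos ⟨hkeep_ψ, hkeep_γ⟩]⟩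
  exact fun y hy => (hmin xs hxsS).trans (hxs_min y hy)

/-- Exact search correctness: each `x ∈ X` is assigned to the ownership list of a nearest
representative `owner x ∈ R`; with `ψ_r` an upper bound on distances within `L_r` and
`γ = min_{r∈R} ρ(q,r)`, the minimizer of `ρ(q,·)` over the union of the lists of the
representatives kept by the pruning rules (`ρ(q,r) ≤ γ + ψ_r` and `ρ(q,r) ≤ 3γ`,
pruning only on strict violation) is a true nearest neighbor of `q` in `X`. -/
theorem exact_search_correct {M : Type*} [MetricSpace M] [DecidableEq M]
    (X R : Finset M) (hXne : X.Nonempty) (hRX : R ⊆ X) (hR : R.Nonempty)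
    (q : M) (owner : M → M)
    (howner : ∀ x ∈ X, owner x ∈ R ∧ ∀ r ∈ R, dist x (owner x) ≤ dist x r)
    (L : M → Finset M) (hL : ∀ r, L r = X.filter fun x => owner x = r)
    (ψ : M → ℝ) (hψ : ∀ r ∈ R, ∀ x ∈ L r, dist x r ≤ ψ r)
    (γ : ℝ) (hγlb : ∀ r ∈ R, γ ≤ dist q r) (hγmem : ∃ r ∈ R, dist q r = γ)
    (S : Finset M)
    (hS : S = R.biUnion fun r =>
      if dist q r ≤ γ + ψ r ∧ dist q r ≤ 3 * γ then L r else ∅)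
    (x0 : M) (hx0 : x0 ∈ S) (hmin : ∀ x ∈ S, dist q x0 ≤ dist q x) :
    ∀ y ∈ X, dist q x0 ≤ dist q y :=
  exact_search_correct_general X R hRX q owner howner L hL ψ hψ γ hγmem S hS x0 hmin
end

section
/- Expected cost bound for exact search: Let M = X ∪ {q} be a finite metric space with expansion rate c, |X| = n, and let R be a Bernoulli(n_r/n) random subset of X. Let γ be the distance from q to its nearest representative. The number of points examined in the second stage of exact search is at most |B(q,7γ)| ≤ c³|B(q,γ)|, and E|B(q,γ) \ {nearest representative counted}| ≤ n/n_r; consequently, the expected number of distance computations in the second stage is at most c³·n/n_r (plus lower-order terms). -/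
/-!
The ball bound is three applications of the doubling condition, since `7γ ≤ 2³γ`. For the
expectation, `x ∈ X` is closer to `q` than every representative iff none of the points `r` with
`ρ(q,r) ≤ ρ(q,x)`, `x` itself included, is selected, an event of probability `(1-p)^rank(x)`
with `p = n_r/n`.
Ranks dominate `1, …, |X|` (ties only raise them), so the expectation is at most
`∑ (1-p)^i ≤ 1/p`.
-/

open scoped NNReal
open MeasureTheory Finset

lemma le_pow_mul_of_doubling {k : ℝ → ℝ} {c : ℝ} (hc : 0 ≤ c)
    (hdbl : ∀ t, 0 < t → k (2 * t) ≤ c * k t) (m : ℕ) {t : ℝ} (ht : 0 < t) :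
    k (2 ^ m * t) ≤ c ^ m * k t := by
  induction m with
  | zero => simp
  | succ m ih =>
    calc k (2 ^ (m + 1) * t) = k (2 * (2 ^ m * t)) := by ring_nf
      _ ≤ c * k (2 ^ m * t) := hdbl _ (by positivity)
      _ ≤ c * (c ^ m * k t) := by gcongr
      _ = c ^ (m + 1) * k t := by ring

lemma card_filter_dist_le_seven_mul_le {M : Type*} [PseudoMetricSpace M] [Fintype M]
    {c : ℝ} (hc : 0 ≤ c) (q : M)
    (hexp : ∀ t, 0 < t → (#{y | dist q y ≤ 2 * t} : ℝ) ≤ c * #{y | dist q y ≤ t})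
    {γ : ℝ} (hγ : 0 < γ) :
    (#{y | dist q y ≤ 7 * γ} : ℝ) ≤ c ^ 3 * #{y | dist q y ≤ γ} := by
  calc (#{y | dist q y ≤ 7 * γ} : ℝ) ≤ #{y | dist q y ≤ 2 ^ 3 * γ} := by
        gcongr with y
        norm_num
    _ ≤ c ^ 3 * #{y | dist q y ≤ γ} :=
        le_pow_mul_of_doubling (k := fun t => (#{y | dist q y ≤ t} : ℝ)) hc hexp 3 hγ

lemma sum_pow_card_filter_le_le_geom_sum {α β : Type*} [LinearOrder β] {a : ℝ}
    (ha₀ : 0 ≤ a) (ha₁ : a ≤ 1) (f : α → β) (s : Finset α) :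
    ∑ x ∈ s, a ^ #{r ∈ s | f r ≤ f x} ≤ ∑ i ∈ range #s, a ^ i := by
  classical
  induction s using Finset.induction_on_max_value f with
  | empty => simp
  | insert y s hy hmax ih =>
    have hy_top : #{r ∈ insert y s | f r ≤ f y} = #s + 1 := by
      rw [filter_true_of_mem (by simpa using hmax), card_insert_of_notMem hy]
    have hmono : ∀ x ∈ s, a ^ #{r ∈ insert y s | f r ≤ f x} ≤ a ^ #{r ∈ s | f r ≤ f x} :=
      fun x _ => pow_le_pow_of_le_one ha₀ ha₁
        (card_le_card (filter_subset_filter _ (subset_insert _ _)))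
    rw [sum_insert hy, hy_top, card_insert_of_notMem hy, sum_range_succ, add_comm]
    gcongr ?_ + ?_
    · exact (sum_le_sum hmono).trans ih
    · exact pow_le_pow_of_le_one ha₀ ha₁ (Nat.le_succ _)

lemma measure_pi_bernoulli_forall_mem_eq_false {ι : Type*} [Fintype ι] (p : ℝ≥0) (hp : p ≤ 1)
    (t : Finset ι) :
    Measure.pi (fun _ : ι => (PMF.bernoulli p hp).toMeasure) {ω | ∀ i ∈ t, ω i = false} =
      (1 - p) ^ #t := by
  have hfalse : (PMF.bernoulli p hp).toMeasure {false} = 1 - p := by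
    rw [PMF.toMeasure_apply_singleton _ _ (measurableSet_singleton _)]
    simp [PMF.bernoulli_apply]
  change Measure.pi _ ((t : Set ι).pi fun _ => {false}) = _
  rw [Measure.pi_pi_finset, hfalse, prod_const]

lemma setOf_forall_true_imp_lt_eq {ι β : Type*} [Fintype ι] [LinearOrder β] (f : ι → β) (b : β) :
    {ω : ι → Bool | ∀ i, ω i = true → b < f i} =
      {ω | ∀ i ∈ ({i | f i ≤ b} : Finset ι), ω i = false} := by
  ext ω
  simp only [Set.mem_setOf_eq, mem_filter, mem_univ, true_and, Bool.eq_false_iff, ne_eq]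
  exact forall_congr' fun i => by rw [← not_lt]; exact not_imp_not.symm

lemma integral_ncard_eq_sum_measureReal {Ω α : Type*} [MeasurableSpace Ω] (μ : Measure Ω)
    [IsFiniteMeasure μ] (s : Finset α) (P : Ω → α → Prop)
    (hP : ∀ x ∈ s, MeasurableSet {ω | P ω x}) :
    ∫ ω, ({x | x ∈ s ∧ P ω x}.ncard : ℝ) ∂μ = ∑ x ∈ s, μ.real {ω | P ω x} := by
  classical
  have hcount : ∀ ω, ({x | x ∈ s ∧ P ω x}.ncard : ℝ) = ∑ x ∈ s, {ω | P ω x}.indicator 1 ω := by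
    intro ω
    rw [← coe_filter, Set.ncard_coe_finset, card_filter]
    push_cast
    rfl
  simp_rw [hcount]
  rw [integral_finset_sum _ fun x hx => (integrable_const 1).indicator (hP x hx)]
  exact sum_congr rfl fun x hx => integral_indicator_one (hP x hx)

lemma integral_ncard_lt_forall_selected_le {α β : Type*} [LinearOrder β] (X : Finset α)
    (f : α → β) {p : ℝ≥0} (hp : p ≤ 1) (hp₀ : 0 < p) :
    ∫ ω, ({x | x ∈ X ∧ ∀ r : X, ω r = true → f x < f r}.ncard : ℝ)
      ∂(Measure.pi fun _ : X => (PMF.bernoulli p hp).toMeasure) ≤ 1 / p := by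
  set μ := Measure.pi fun _ : X => (PMF.bernoulli p hp).toMeasure
  have hprob : ∀ x, μ.real {ω | ∀ r : X, ω r = true → f x < f r} =
      (1 - p : ℝ) ^ #{r : X | f r ≤ f x} := by
    intro x
    rw [measureReal_def, setOf_forall_true_imp_lt_eq (fun r : X => f r),
      measure_pi_bernoulli_forall_mem_eq_false, ENNReal.toReal_pow, ← ENNReal.coe_one,
      ← ENNReal.coe_sub, ENNReal.coe_toReal, NNReal.coe_sub hp, NNReal.coe_one]
  rw [integral_ncard_eq_sum_measureReal _ _ _ fun x _ => (Set.toFinite _).measurableSet]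
  calc ∑ x ∈ X, μ.real {ω | ∀ r : X, ω r = true → f x < f r}
      = ∑ x : X, (1 - p : ℝ) ^ #{r : X | f r ≤ f x} := by
        simp_rw [hprob]
        exact (sum_coe_sort X _).symm
    _ ≤ ∑ i ∈ range #(univ : Finset X), (1 - p : ℝ) ^ i :=
        sum_pow_card_filter_le_le_geom_sum (by simpa using hp) (by simp) _ _
    _ ≤ 1 / p := by
        rw [range_eq_Ico]
        simpa using geom_sum_Ico_le_of_lt_one (x := 1 - (p : ℝ)) (by simpa using hp)
          (by simpa using hp₀) (m := 0) (n := #(univ : Finset X))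

theorem exact_search_expected_cost_general {M : Type*} [MetricSpace M] [Fintype M]
    (c : ℝ) (hc : 1 ≤ c)
    (hexp : ∀ (x : M) (t : ℝ), 0 < t →
      ((Finset.univ.filter fun y => dist x y ≤ 2 * t).card : ℝ) ≤
        c * ((Finset.univ.filter fun y => dist x y ≤ t).card : ℝ))
    (X : Finset M) (q : M) (n nr : ℕ)
    (hnr : 0 < nr) (hle : nr ≤ n)
    (hp : ENNReal.ofReal ((nr : ℝ) / n) ≤ 1)
    (μ : Measure ({x // x ∈ X} → Bool))
    (hμ : μ = Measure.pi fun _ =>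
      (PMF.bernoulli (Real.toNNReal ((nr : ℝ) / n)) (ENNReal.coe_le_one_iff.mp hp)).toMeasure) :
    (∀ γ : ℝ, 0 < γ →
      ((Finset.univ.filter fun y => dist q y ≤ 7 * γ).card : ℝ) ≤
        c ^ 3 * ((Finset.univ.filter fun y => dist q y ≤ γ).card : ℝ)) ∧
    ((∫ ω, (({x : M | x ∈ X ∧ ∀ r : {x // x ∈ X}, ω r = true →
        dist q x < dist q (r : M)}.ncard : ℝ)) ∂μ) ≤ (n : ℝ) / nr) ∧
    ((∫ ω, c ^ 3 * (({x : M | x ∈ X ∧ ∀ r : {x // x ∈ X}, ω r = true →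
        dist q x < dist q (r : M)}.ncard : ℝ)) ∂μ) ≤ c ^ 3 * ((n : ℝ) / nr)) := by
  have hn₀ : 0 < n := hnr.trans_le hle
  have hpos : (0 : ℝ) < nr / n := by positivity
  subst hμ
  have hexpected := integral_ncard_lt_forall_selected_le X (dist q)
    (ENNReal.coe_le_one_iff.mp hp) (Real.toNNReal_pos.mpr hpos)
  rw [Real.coe_toNNReal _ hpos.le, one_div_div] at hexpected
  refine ⟨fun γ hγ => card_filter_dist_le_seven_mul_le (by linarith) q (hexp q) hγ,
    hexpected, ?_⟩
  rw [integral_const_mul]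
  gcongr

/-- Expected cost of the second stage of exact search: in a finite metric space with
expansion rate `c`, (i) for every `γ > 0`, `|B(q,7γ)| ≤ c³|B(q,γ)|`; (ii) the expected
number of database points strictly closer to `q` than every Bernoulli(`n_r/n`)-selected
representative is at most `n/n_r`; consequently (iii) the expected number of distance
computations in the second stage is at most `c³·n/n_r`. -/
theorem exact_search_expected_cost {M : Type*} [MetricSpace M] [Fintype M]
    (c : ℝ) (hc : 1 ≤ c)
    (hexp : ∀ (x : M) (t : ℝ), 0 < t →
      ((Finset.univ.filter fun y => dist x y ≤ 2 * t).card : ℝ) ≤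
        c * ((Finset.univ.filter fun y => dist x y ≤ t).card : ℝ))
    (X : Finset M) (q : M) (n nr : ℕ)
    (hn : X.card = n) (hnr : 0 < nr) (hle : nr ≤ n)
    (hp : ENNReal.ofReal ((nr : ℝ) / n) ≤ 1)
    (μ : Measure ({x // x ∈ X} → Bool))
    (hμ : μ = Measure.pi fun _ =>
      (PMF.bernoulli (Real.toNNReal ((nr : ℝ) / n)) (ENNReal.coe_le_one_iff.mp hp)).toMeasure) :
    (∀ γ : ℝ, 0 < γ →
      ((Finset.univ.filter fun y => dist q y ≤ 7 * γ).card : ℝ) ≤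
        c ^ 3 * ((Finset.univ.filter fun y => dist q y ≤ γ).card : ℝ)) ∧
    ((∫ ω, (({x : M | x ∈ X ∧ ∀ r : {x // x ∈ X}, ω r = true →
        dist q x < dist q (r : M)}.ncard : ℝ)) ∂μ) ≤ (n : ℝ) / nr) ∧
    ((∫ ω, c ^ 3 * (({x : M | x ∈ X ∧ ∀ r : {x // x ∈ X}, ω r = true →
        dist q x < dist q (r : M)}.ncard : ℝ)) ∂μ) ≤ c ^ 3 * ((n : ℝ) / nr)) :=
  exact_search_expected_cost_general c hc hexp X q n nr hnr hle hp μ hμ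
end
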